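/- Let x : ℝ → ℝ² be a twice differentiable curve, let a > 0, T > 0, and let f ∈ ℝ² with ‖f‖ < 2a. Assume: (i) for every t, ‖x(t)‖ + ‖x(t) − f‖ = 2a and x(t) ≠ 0 (the orbit is an ellipse with semi-major axis a and one focus at the origin — Kepler's first law); (ii) for every t, x(t) × x'(t) = 2πab/T, where b := √(a² − ‖f‖²/4) is the semi-minor axis (Kepler's second law, with the full area πab of the ellipse swept out in one period T). Then for every t the acceleration points toward the origin with magnitude (π²/2)·(2a)³/T² · 1/‖x(t)‖², i.e. x''(t) = −(4π²a³/T²)·(1/‖x(t)‖³) • x(t). -/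

import Mathlib

noncomputable section

/-- Planar cross product `u × v = u₁v₂ − u₂v₁` on `ℝ²`. -/
def cross (u v : EuclideanSpace ℝ (Fin 2)) : ℝ := u 0 * v 1 - u 1 * v 0

/-!
Kepler's first law puts the orbit on the conic `‖x‖ = ℓ + ⟪x, e⟫` with `ℓ = b² / a` and
`e = f / (2a)`. By the second law the angular momentum `L = x × x'` is constant, so
`x × x'' = 0` and the acceleration is central, `x'' = μ x`. Computing `r r''` for `r = ‖x‖`
in two ways, from the conic equation and from `r² = ⟪x, x⟫`, and using Lagrange's identity
`r² ‖x'‖² = ⟪x, x'⟫² + L²`, gives `μ r³ ℓ = -L²`; finally `L² / ℓ = 4π²a³/T²`.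
-/

open scoped InnerProductSpace

section RealInnerProductSpace

variable {E : Type*} [NormedAddCommGroup E] [InnerProductSpace ℝ E]

theorem norm_eq_of_norm_add_norm_sub_eq {p f : E} {a : ℝ} (ha : a ≠ 0)
    (h : ‖p‖ + ‖p - f‖ = 2 * a) :
    ‖p‖ = (a ^ 2 - ‖f‖ ^ 2 / 4) / a + ⟪p, (2 * a)⁻¹ • f⟫_ℝ := by
  have hsq : ‖p - f‖ ^ 2 = (2 * a - ‖p‖) ^ 2 := by rw [← h]; ring
  rw [norm_sub_sq_real] at hsq
  rw [real_inner_smul_right]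
  field_simp
  linear_combination 2 * hsq

theorem norm_mul_eq_inner_of_hasDerivAt {x : ℝ → E} {v : E} {ρ t : ℝ}
    (hx : HasDerivAt x v t) (hr : HasDerivAt (fun s => ‖x s‖) ρ t) :
    ‖x t‖ * ρ = ⟪x t, v⟫_ℝ := by
  have h := hx.inner ℝ hx
  simp only [real_inner_self_eq_norm_mul_norm] at h
  have := (hr.fun_mul hr).unique h
  rw [real_inner_comm (x t) v] at this
  linarith

theorem sq_add_norm_mul_eq_of_hasDerivAt {x v : ℝ → E} {ρ : ℝ → ℝ} {w : E} {ρ' t : ℝ}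
    (hx : ∀ s, HasDerivAt x (v s) s) (hr : ∀ s, HasDerivAt (fun s => ‖x s‖) (ρ s) s)
    (hv : HasDerivAt v w t) (hρ : HasDerivAt ρ ρ' t) :
    ρ t ^ 2 + ‖x t‖ * ρ' = ‖v t‖ ^ 2 + ⟪x t, w⟫_ℝ := by
  have h1 := (hr t).fun_mul hρ
  have heq : (fun s => ‖x s‖ * ρ s) = fun s => ⟪x s, v s⟫_ℝ :=
    funext fun s => norm_mul_eq_inner_of_hasDerivAt (hx s) (hr s)
  rw [heq] at h1
  have := h1.unique ((hx t).inner ℝ hv)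
  rw [real_inner_self_eq_norm_sq] at this
  linarith

theorem mul_norm_pow_three_mul_eq_of_norm_eq_add_inner {x v : ℝ → E} {w e : E} {ℓ μ t : ℝ}
    (hx : ∀ s, HasDerivAt x (v s) s) (hv : HasDerivAt v w t)
    (hconic : ∀ s, ‖x s‖ = ℓ + ⟪x s, e⟫_ℝ) (hw : w = μ • x t) :
    μ * ‖x t‖ ^ 3 * ℓ = ⟪x t, v t⟫_ℝ ^ 2 - ‖x t‖ ^ 2 * ‖v t‖ ^ 2 := by
  have hr : ∀ s, HasDerivAt (fun s => ‖x s‖) ⟪v s, e⟫_ℝ s := fun s => by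
    rw [funext hconic]
    simpa using ((hx s).inner ℝ (hasDerivAt_const s e)).const_add ℓ
  have h1 := norm_mul_eq_inner_of_hasDerivAt (hx t) (hr t)
  have h2 := sq_add_norm_mul_eq_of_hasDerivAt hx hr hv
    (by simpa using hv.inner ℝ (hasDerivAt_const t e))
  rw [hw, real_inner_smul_left, real_inner_smul_right, real_inner_self_eq_norm_sq] at h2
  linear_combination (-‖x t‖ ^ 2) * h2 + (‖x t‖ * ⟪v t, e⟫_ℝ + ⟪x t, v t⟫_ℝ) * h1
    - μ * ‖x t‖ ^ 3 * hconic t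

end RealInnerProductSpace

theorem EuclideanSpace.real_inner_fin_two (u v : EuclideanSpace ℝ (Fin 2)) :
    ⟪u, v⟫_ℝ = u 0 * v 0 + u 1 * v 1 := by
  simp [PiLp.inner_apply, Fin.sum_univ_two, mul_comm]

theorem EuclideanSpace.real_norm_sq_fin_two (u : EuclideanSpace ℝ (Fin 2)) :
    ‖u‖ ^ 2 = u 0 ^ 2 + u 1 ^ 2 := by
  simp [EuclideanSpace.real_norm_sq_eq, Fin.sum_univ_two]

theorem norm_sq_mul_norm_sq_eq_inner_sq_add_cross_sq (u v : EuclideanSpace ℝ (Fin 2)) :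
    ‖u‖ ^ 2 * ‖v‖ ^ 2 = ⟪u, v⟫_ℝ ^ 2 + cross u v ^ 2 := by
  simp only [EuclideanSpace.real_norm_sq_fin_two, EuclideanSpace.real_inner_fin_two, cross]
  ring

theorem eq_smul_of_cross_eq_zero {u w : EuclideanSpace ℝ (Fin 2)} (hu : u ≠ 0)
    (h : cross u w = 0) :
    w = (⟪u, w⟫_ℝ / ‖u‖ ^ 2) • u := by
  have hu2 : ‖u‖ ^ 2 ≠ 0 := by positivity
  have hsq := EuclideanSpace.real_norm_sq_fin_two u
  rw [EuclideanSpace.real_inner_fin_two]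
  unfold cross at h
  ext i
  fin_cases i <;> simp only [Fin.zero_eta, Fin.mk_one, Fin.isValue, PiLp.smul_apply, smul_eq_mul] <;>
    field_simp
  · linear_combination w 0 * hsq - u 1 * h
  · linear_combination w 1 * hsq + u 0 * h

theorem HasDerivAt.cross {u v : ℝ → EuclideanSpace ℝ (Fin 2)} {u' v' : EuclideanSpace ℝ (Fin 2)}
    {t : ℝ} (hu : HasDerivAt u u' t) (hv : HasDerivAt v v' t) :
    HasDerivAt (fun s => _root_.cross (u s) (v s))
      (_root_.cross u' (v t) + _root_.cross (u t) v') t := by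
  have hc : ∀ {g : ℝ → EuclideanSpace ℝ (Fin 2)} {g'} (i : Fin 2), HasDerivAt g g' t →
      HasDerivAt (fun s => g s i) (g' i) t :=
    fun i hg =>
      (EuclideanSpace.proj i : EuclideanSpace ℝ (Fin 2) →L[ℝ] ℝ).hasFDerivAt.comp_hasDerivAt t hg
  unfold _root_.cross
  exact (((hc 0 hu).fun_mul (hc 1 hv)).fun_sub ((hc 1 hu).fun_mul (hc 0 hv))).congr_deriv (by ring)

theorem cross_eq_zero_of_cross_eq_const {x v : ℝ → EuclideanSpace ℝ (Fin 2)}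
    {w : EuclideanSpace ℝ (Fin 2)} {L t : ℝ} (hx : HasDerivAt x (v t) t) (hv : HasDerivAt v w t)
    (hL : ∀ s, cross (x s) (v s) = L) : cross (x t) w = 0 := by
  have h := hx.cross hv
  have hvv : cross (v t) (v t) = 0 := by unfold cross; ring
  rw [funext hL, hvv, zero_add] at h
  exact h.unique (hasDerivAt_const t L)

theorem kepler_first_second_implies_inverse_square_general
    (x : ℝ → EuclideanSpace ℝ (Fin 2))
    (hx : Differentiable ℝ x) (hx' : Differentiable ℝ (deriv x))
    (a T : ℝ)
    (f : EuclideanSpace ℝ (Fin 2)) (hf : ‖f‖ < 2 * a)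
    (hellipse : ∀ t : ℝ, ‖x t‖ + ‖x t - f‖ = 2 * a)
    (harea : ∀ t : ℝ,
      cross (x t) (deriv x t) =
        2 * Real.pi * a * Real.sqrt (a ^ 2 - ‖f‖ ^ 2 / 4) / T) :
    ∀ t : ℝ,
      deriv (deriv x) t =
        (-(4 * Real.pi ^ 2 * a ^ 3 / T ^ 2) * (1 / ‖x t‖ ^ 3)) • x t := by
  intro t
  have ha : 0 < a := by linarith [norm_nonneg f]
  have hb2 : 0 < a ^ 2 - ‖f‖ ^ 2 / 4 := by nlinarith [norm_nonneg f]
  have hxt : x t ≠ 0 := fun h0 => by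
    have := hellipse t
    rw [h0, zero_sub, norm_neg, norm_zero, zero_add] at this
    exact hf.ne this
  have hcentral := eq_smul_of_cross_eq_zero hxt <|
    cross_eq_zero_of_cross_eq_const (hx t).hasDerivAt (hx' t).hasDerivAt harea
  have hcoeff := mul_norm_pow_three_mul_eq_of_norm_eq_add_inner
    (fun s => (hx s).hasDerivAt) (hx' t).hasDerivAt
    (fun s => norm_eq_of_norm_add_norm_sub_eq ha.ne' (hellipse s)) hcentral
  rw [norm_sq_mul_norm_sq_eq_inner_sq_add_cross_sq, harea, div_pow, mul_pow,
    Real.sq_sqrt hb2.le] at hcoeff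
  have hμ : ⟪x t, deriv (deriv x) t⟫_ℝ / ‖x t‖ ^ 2 * ‖x t‖ ^ 3 =
      -(4 * Real.pi ^ 2 * a ^ 3 / T ^ 2) := by
    refine mul_right_cancel₀ (b := (a ^ 2 - ‖f‖ ^ 2 / 4) / a) (by positivity) ?_
    rw [hcoeff]
    field_simp
    ring
  rw [hcentral, ← hμ]
  have hr : 0 < ‖x t‖ := norm_pos_iff.2 hxt
  field_simp

/-- Kepler's first and second laws imply that the acceleration points toward
the Sun with magnitude `(π²/2)·(2a)³/T² · 1/r² = 4π²a³/T² · 1/r²`. -/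
theorem kepler_first_second_implies_inverse_square
    (x : ℝ → EuclideanSpace ℝ (Fin 2))
    (hx : Differentiable ℝ x) (hx' : Differentiable ℝ (deriv x))
    (a T : ℝ) (ha : 0 < a) (hT : 0 < T)
    (f : EuclideanSpace ℝ (Fin 2)) (hf : ‖f‖ < 2 * a)
    (hellipse : ∀ t : ℝ, ‖x t‖ + ‖x t - f‖ = 2 * a)
    (hne : ∀ t : ℝ, x t ≠ 0)
    (harea : ∀ t : ℝ,
      cross (x t) (deriv x t) =
        2 * Real.pi * a * Real.sqrt (a ^ 2 - ‖f‖ ^ 2 / 4) / T) :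
    ∀ t : ℝ,
      deriv (deriv x) t =
        (-(4 * Real.pi ^ 2 * a ^ 3 / T ^ 2) * (1 / ‖x t‖ ^ 3)) • x t :=
  kepler_first_second_implies_inverse_square_general x hx hx' a T f hf hellipse harea
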